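/- arXiv:1909.08822 — 7 statements merged into one kernel-verified Lean document; each statement's English description precedes it below -/
import Mathlib

section
/- For every real number α > 0 and every t ∈ (−∞, 0), the functions ζ and χ satisfy the first equation of the ODE system of Section 4.3: χ(t)·ζ′(t) − χ′(t) = 1. -/
/-- For a real number `α > 0`, define `ζ(t) = log((1/α + 1)/(1/α + 1 − e^t))` and
`χ(t) = (1/α² − 1 + e^t − (1/α + 1)·t)/(1/α + 1 − e^t)` on `(−∞, 0)`.
Then for every `t < 0`, the first ODE of Section 4.3 holds: `χ(t)·ζ′(t) − χ′(t) = 1`. -/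
theorem stmt_0 (α : ℝ) (hα : 0 < α) (ζ χ : ℝ → ℝ)
    (hζ : ∀ s, ζ s = Real.log ((1 / α + 1) / (1 / α + 1 - Real.exp s)))
    (hχ : ∀ s, χ s =
      (1 / α ^ 2 - 1 + Real.exp s - (1 / α + 1) * s) / (1 / α + 1 - Real.exp s))
    (t : ℝ) (ht : t < 0) :
    χ t * deriv ζ t - deriv χ t = 1 := by
  have hζf : ζ = fun s => Real.log ((1 / α + 1) / (1 / α + 1 - Real.exp s)) := funext hζ
  have hχf : χ = fun s =>
      (1 / α ^ 2 - 1 + Real.exp s - (1 / α + 1) * s) / (1 / α + 1 - Real.exp s) := funext hχ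
  have hα' : 0 < 1 / α := by positivity
  have hexp : Real.exp t < 1 := Real.exp_lt_one_iff.mpr ht
  have hD : 0 < 1 / α + 1 - Real.exp t := by linarith
  have hDne : 1 / α + 1 - Real.exp t ≠ 0 := ne_of_gt hD
  have hCpos : 0 < 1 / α + 1 := by linarith
  have hCne : (1 / α + 1) ≠ 0 := ne_of_gt hCpos
  have hDen : HasDerivAt (fun s => 1 / α + 1 - Real.exp s) (-Real.exp t) t :=
    (Real.hasDerivAt_exp t).const_sub (1 / α + 1)
  -- derivative of ζ
  have hinner : HasDerivAt (fun s => (1 / α + 1) / (1 / α + 1 - Real.exp s))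
      ((0 * (1 / α + 1 - Real.exp t) - (1 / α + 1) * (-Real.exp t)) /
        (1 / α + 1 - Real.exp t) ^ 2) t :=
    (hasDerivAt_const t (1 / α + 1)).div hDen hDne
  have hratio : (1 / α + 1) / (1 / α + 1 - Real.exp t) ≠ 0 := by positivity
  have hζd : HasDerivAt ζ (Real.exp t / (1 / α + 1 - Real.exp t)) t := by
    rw [hζf]
    have h := hinner.log hratio
    convert h using 1
    set c := 1 / α + 1
    set E := Real.exp t
    field_simp
    ring
  -- derivative of χ
  have hN : HasDerivAt (fun s => 1 / α ^ 2 - 1 + Real.exp s - (1 / α + 1) * s)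
      (Real.exp t - (1 / α + 1)) t := by
    have h1 : HasDerivAt (fun s => 1 / α ^ 2 - 1 + Real.exp s) (Real.exp t) t :=
      (Real.hasDerivAt_exp t).const_add (1 / α ^ 2 - 1)
    have h2 : HasDerivAt (fun s : ℝ => (1 / α + 1) * s) ((1 / α + 1) * 1) t :=
      (hasDerivAt_id t).const_mul (1 / α + 1)
    rw [mul_one] at h2
    exact h1.sub h2
  have hχd : HasDerivAt χ
      (((Real.exp t - (1 / α + 1)) * (1 / α + 1 - Real.exp t) -
        (1 / α ^ 2 - 1 + Real.exp t - (1 / α + 1) * t) * (-Real.exp t)) /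
        (1 / α + 1 - Real.exp t) ^ 2) t := by
    rw [hχf]
    exact hN.div hDen hDne
  rw [hζd.deriv, hχd.deriv, hχ t]
  set c := 1 / α + 1
  set E := Real.exp t
  set N := 1 / α ^ 2 - 1 + E - c * t
  field_simp
  ring
end

section
/- For every real number α > 0 and every t ∈ (−∞, 0), one has χ(t)·ζ″(t) − χ″(t) > 0 and the second equation of the ODE system of Section 4.3 holds: (χ(t) + χ′(t)²/(χ(t)·ζ″(t) − χ″(t)))·e^{ζ(t)+t} = 1/α + 1. -/
/-!
Write `c = 1/α + 1`, so that `1/α² - 1 = c² - 2c`, and put `E = eᵗ`, `D = c - E` and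
`G = c(1 - E) + tE` (`gap c t`). The numerator `N = c² - 2c + E - ct` of `χ` satisfies
`D² - NE = cG`, which makes everything collapse: `ζ″ = cE/D²`, `χ′ = -cG/D²` and `χζ″ - χ″ = cEG/D³`.
For `t < 0` and `c ≥ 1`, `G ≥ 1 - (1 - t)eᵗ > 0`, and the second ODE reduces to
`χ + χ′²/(χζ″ - χ″) = (NE + cG)/(ED) = D/E` together with `e^{ζ+t} = cE/D`.
-/

open Real Filter Topology

namespace ZetaChi

noncomputable def zeta (c s : ℝ) : ℝ := log (c / (c - exp s))

noncomputable def chi (c s : ℝ) : ℝ := (c ^ 2 - 2 * c + exp s - c * s) / (c - exp s)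

noncomputable def gap (c s : ℝ) : ℝ := c * (1 - exp s) + s * exp s

variable {c : ℝ}

lemma eventually_exp_lt {t : ℝ} (ht : exp t < c) : ∀ᶠ s in 𝓝 t, exp s < c :=
  (continuous_exp.tendsto t).eventually (gt_mem_nhds ht)

lemma gap_pos (hc : 1 ≤ c) {t : ℝ} (ht : t < 0) : 0 < gap c t := by
  have hE : exp t < 1 := exp_lt_one_iff.mpr ht
  have h1t : (1 - t) * exp t < 1 :=
    calc (1 - t) * exp t < exp (-t) * exp t := by
          gcongr; linarith [add_one_lt_exp (neg_ne_zero.mpr ht.ne)]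
      _ = 1 := by rw [← exp_add, neg_add_cancel, exp_zero]
  unfold gap
  nlinarith [mul_nonneg (sub_nonneg.mpr hc) (sub_pos.mpr hE).le]

lemma chi_numerator_identity (c s : ℝ) :
    (c - exp s) ^ 2 - (c ^ 2 - 2 * c + exp s - c * s) * exp s = c * gap c s := by
  unfold gap; ring

lemma hasDerivAt_zeta {s : ℝ} (hs : exp s < c) :
    HasDerivAt (zeta c) (exp s / (c - exp s)) s := by
  have hD : 0 < c - exp s := sub_pos.mpr hs
  have hc : 0 < c := (exp_pos s).trans hs
  have hlog := (((hasDerivAt_exp s).const_sub c).log hD.ne').const_sub (log c)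
  have heq : zeta c =ᶠ[𝓝 s] fun u => log c - log (c - exp u) := by
    filter_upwards [eventually_exp_lt hs] with u hu
    rw [zeta, log_div hc.ne' (sub_pos.mpr hu).ne']
  exact (hlog.congr_of_eventuallyEq heq).congr_deriv (by ring)

lemma hasDerivAt_deriv_zeta {t : ℝ} (ht : exp t < c) :
    HasDerivAt (deriv (zeta c)) (c * exp t / (c - exp t) ^ 2) t := by
  have heq : deriv (zeta c) =ᶠ[𝓝 t] fun s => exp s / (c - exp s) := by
    filter_upwards [eventually_exp_lt ht] with s hs using (hasDerivAt_zeta hs).deriv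
  refine (((hasDerivAt_exp t).div ((hasDerivAt_exp t).const_sub c)
    (sub_pos.mpr ht).ne').congr_of_eventuallyEq heq).congr_deriv ?_
  field_simp
  ring

lemma hasDerivAt_gap (s : ℝ) : HasDerivAt (gap c) (exp s * (1 - c + s)) s := by
  refine ((((hasDerivAt_exp s).const_sub 1).const_mul c).add
    ((hasDerivAt_id s).mul (hasDerivAt_exp s))).congr_deriv ?_
  simp only [id]
  ring

lemma hasDerivAt_chi {s : ℝ} (hs : exp s < c) :
    HasDerivAt (chi c) (-(c * gap c s) / (c - exp s) ^ 2) s := by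
  have hnum : HasDerivAt (fun u => c ^ 2 - 2 * c + exp u - c * u) (exp s - c) s := by
    refine (((hasDerivAt_exp s).const_add (c ^ 2 - 2 * c)).sub
      ((hasDerivAt_id s).const_mul c)).congr_deriv ?_
    simp only [mul_one]
  refine (hnum.div ((hasDerivAt_exp s).const_sub c) (sub_pos.mpr hs).ne').congr_deriv ?_
  rw [← chi_numerator_identity]
  ring

lemma hasDerivAt_deriv_chi {t : ℝ} (ht : exp t < c) :
    HasDerivAt (deriv (chi c))
      (-(c * exp t * ((1 - c + t) * (c - exp t) + 2 * gap c t)) / (c - exp t) ^ 3) t := by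
  have hD : 0 < c - exp t := sub_pos.mpr ht
  have heq : deriv (chi c) =ᶠ[𝓝 t] fun s => -(c * gap c s) / (c - exp s) ^ 2 := by
    filter_upwards [eventually_exp_lt ht] with s hs using (hasDerivAt_chi hs).deriv
  refine ((((hasDerivAt_gap t).const_mul c).neg.div
    (((hasDerivAt_exp t).const_sub c).pow 2) (pow_pos hD 2).ne').congr_of_eventuallyEq
      heq).congr_deriv ?_
  simp only [Pi.neg_apply, Pi.pow_apply]
  field_simp
  ring

lemma chi_mul_deriv_deriv_zeta_sub_deriv_deriv_chi {t : ℝ} (ht : exp t < c) :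
    chi c t * deriv (deriv (zeta c)) t - deriv (deriv (chi c)) t =
      c * exp t * gap c t / (c - exp t) ^ 3 := by
  have hD : 0 < c - exp t := sub_pos.mpr ht
  rw [(hasDerivAt_deriv_zeta ht).deriv, (hasDerivAt_deriv_chi ht).deriv, chi]
  field_simp
  unfold gap
  ring

lemma ode_second_eq {t : ℝ} (ht : exp t < c) :
    (chi c t + deriv (chi c) t ^ 2 /
        (chi c t * deriv (deriv (zeta c)) t - deriv (deriv (chi c)) t)) *
      exp (zeta c t + t) = c := by
  have hD : 0 < c - exp t := sub_pos.mpr ht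
  have hc : 0 < c := (exp_pos t).trans ht
  have hE := exp_pos t
  rw [chi_mul_deriv_deriv_zeta_sub_deriv_deriv_chi ht, (hasDerivAt_chi ht).deriv, exp_add, zeta,
    exp_log (div_pos hc hD), chi]
  field_simp
  linear_combination -chi_numerator_identity c t

end ZetaChi

open ZetaChi in
/-- For a real number `α > 0`, define `ζ(t) = log((1/α + 1)/(1/α + 1 − e^t))` and
`χ(t) = (1/α² − 1 + e^t − (1/α + 1)·t)/(1/α + 1 − e^t)` on `(−∞, 0)`.
Then for every `t < 0` one has `χ(t)·ζ″(t) − χ″(t) > 0` and the second ODE of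
Section 4.3 holds: `(χ(t) + χ′(t)²/(χ(t)·ζ″(t) − χ″(t)))·e^{ζ(t)+t} = 1/α + 1`. -/
theorem stmt_1 (α : ℝ) (hα : 0 < α) (ζ χ : ℝ → ℝ)
    (hζ : ∀ s, ζ s = Real.log ((1 / α + 1) / (1 / α + 1 - Real.exp s)))
    (hχ : ∀ s, χ s =
      (1 / α ^ 2 - 1 + Real.exp s - (1 / α + 1) * s) / (1 / α + 1 - Real.exp s))
    (t : ℝ) (ht : t < 0) :
    0 < χ t * deriv (deriv ζ) t - deriv (deriv χ) t ∧
    (χ t + (deriv χ t) ^ 2 / (χ t * deriv (deriv ζ) t - deriv (deriv χ) t)) *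
        Real.exp (ζ t + t) = 1 / α + 1 := by
  have hc : 1 ≤ 1 / α + 1 := le_add_of_nonneg_left (by positivity)
  have hζc : ζ = zeta (1 / α + 1) := funext hζ
  have hχc : χ = chi (1 / α + 1) := funext fun s => by
    rw [hχ, chi]
    congr 2
    field_simp
    ring
  have hexp : exp t < 1 / α + 1 := (exp_lt_one_iff.mpr ht).trans_le hc
  subst hζc hχc
  refine ⟨?_, ode_second_eq hexp⟩
  rw [chi_mul_deriv_deriv_zeta_sub_deriv_deriv_chi hexp]
  have hD : 0 < 1 / α + 1 - exp t := sub_pos.mpr hexp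
  exact div_pos (mul_pos (mul_pos (by positivity) (exp_pos t)) (gap_pos hc ht)) (pow_pos hD 3)
end

section
/- For every real number α > 0, the function χ satisfies: χ′(t) < 0 and χ(t) > 1/α for all t ∈ (−∞, 0); moreover χ(t) tends to 1/α as t → 0⁻ (so inf_{t<0} χ(t) = 1/α). -/
/-!
Write `a = 1/α`. Two identities drive everything:
`χ t - a = (a + 1) (e^t - 1 - t) / (a + 1 - e^t)`, which is positive since `e^t > 1 + t`, and
`χ' t = (a + 1) ((a + 1) (e^t - 1) - t e^t) / (a + 1 - e^t)^2`, whose numerator is at most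
`(a + 1) a t e^t < 0` because `e^t - 1 ≤ t e^t`. The limit is continuity of `χ` at `0`, where `χ 0 = a`.
-/

open Filter Real

lemma exp_sub_one_le_mul_exp (t : ℝ) : exp t - 1 ≤ t * exp t := by
  have h := mul_le_mul_of_nonneg_right (one_sub_le_exp_neg t) (exp_pos t).le
  rw [← exp_add, neg_add_cancel, exp_zero] at h
  linarith

namespace Chi

/-- The function `χ` of the statement, written with `a = 1/α`. -/
noncomputable def chi (a t : ℝ) : ℝ :=
  (a ^ 2 - 1 + exp t - (a + 1) * t) / (a + 1 - exp t)

variable {a t : ℝ}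

lemma denom_pos (ha : 0 < a) (ht : t < 0) : 0 < a + 1 - exp t := by
  linarith [exp_lt_one_iff.2 ht]

lemma chi_sub_eq (h : a + 1 - exp t ≠ 0) :
    chi a t - a = (a + 1) * (exp t - 1 - t) / (a + 1 - exp t) := by
  rw [chi, div_sub' h]
  congr 1
  ring

lemma hasDerivAt_chi (h : a + 1 - exp t ≠ 0) :
    HasDerivAt (chi a)
      ((a + 1) * ((a + 1) * (exp t - 1) - t * exp t) / (a + 1 - exp t) ^ 2) t := by
  have hnum : HasDerivAt (fun s => a ^ 2 - 1 + exp s - (a + 1) * s) (exp t - (a + 1)) t := by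
    simpa using (((hasDerivAt_const t (a ^ 2 - 1)).fun_add (hasDerivAt_exp t)).fun_sub
      ((hasDerivAt_id t).const_mul (a + 1)))
  have hden : HasDerivAt (fun s => a + 1 - exp s) (-exp t) t := by
    simpa using (hasDerivAt_const t (a + 1)).fun_sub (hasDerivAt_exp t)
  exact (hnum.fun_div hden h).congr_deriv (by ring)

lemma lt_chi (ha : 0 < a) (ht : t < 0) : a < chi a t := by
  have hden := denom_pos ha ht
  have hpos : 0 < (a + 1) * (exp t - 1 - t) / (a + 1 - exp t) := by
    have := add_one_lt_exp ht.ne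
    exact div_pos (mul_pos (by linarith) (by linarith)) hden
  linarith [chi_sub_eq hden.ne']

lemma deriv_chi_neg (ha : 0 < a) (ht : t < 0) : deriv (chi a) t < 0 := by
  have hden := denom_pos ha ht
  rw [(hasDerivAt_chi hden.ne').deriv]
  refine div_neg_of_neg_of_pos (mul_neg_of_pos_of_neg (by linarith) ?_) (by positivity)
  have hkey := mul_le_mul_of_nonneg_left (exp_sub_one_le_mul_exp t) (by linarith : 0 ≤ a + 1)
  nlinarith [mul_pos (mul_pos ha (neg_pos.2 ht)) (exp_pos t)]

lemma tendsto_chi_nhdsLT_zero (ha : 0 < a) :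
    Tendsto (chi a) (nhdsWithin 0 (Set.Iio 0)) (nhds a) := by
  have hcont : ContinuousAt (chi a) 0 :=
    ContinuousAt.div (by fun_prop) (by fun_prop) (by simp [ha.ne'])
  have hval : chi a 0 = a := by
    rw [chi, exp_zero]
    field_simp [ha.ne']
    ring
  simpa [hval] using hcont.continuousWithinAt.tendsto

end Chi

open Chi in
/-- For a real number `α > 0`, define
`χ(t) = (1/α² − 1 + e^t − (1/α + 1)·t)/(1/α + 1 − e^t)` on `(−∞, 0)`.
Then `χ′(t) < 0` and `χ(t) > 1/α` for all `t < 0`; moreover `χ(t) → 1/α`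
as `t → 0⁻` (so `inf_{t<0} χ(t) = 1/α`). -/
theorem stmt_3 (α : ℝ) (hα : 0 < α) (χ : ℝ → ℝ)
    (hχ : ∀ s, χ s =
      (1 / α ^ 2 - 1 + Real.exp s - (1 / α + 1) * s) / (1 / α + 1 - Real.exp s)) :
    (∀ t < (0 : ℝ), deriv χ t < 0 ∧ 1 / α < χ t) ∧
    Tendsto χ (nhdsWithin 0 (Set.Iio 0)) (nhds (1 / α)) := by
  have hχ_eq : χ = chi (1 / α) := funext fun s => by rw [hχ, chi, one_div_pow]
  have ha : 0 < 1 / α := by positivity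
  subst hχ_eq
  exact ⟨fun t ht => ⟨deriv_chi_neg ha ht, lt_chi ha ht⟩, tendsto_chi_nhdsLT_zero ha⟩
end

section
/- For all t ∈ (−∞, α₀), the functions ζ and χ satisfy the first equation of the ODE system of Section 5.3: χ(t)·ζ′(t) − χ′(t) = 1. -/
/-!
Write `F(t) = ∫_t^{α₀} G`, so `F' = -G` and `χ = (F + 1/(α²R(α₀)))/G`, while `ζ' = -G'/G`.
The quotient rule gives `χ' = -1 - χ·G'/G = -1 + χ·ζ'`. Both derivatives come from the
fundamental theorem of calculus, as `1/R` and hence `G` are continuous on `(-∞, α₀]`.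
-/

open MeasureTheory Set intervalIntegral

section IntegralLeft

variable {f : ℝ → ℝ} {b : ℝ}

theorem continuousOn_integral_left_Iic (hf : ContinuousOn f (Iic b)) :
    ContinuousOn (fun s => ∫ x in s..b, f x) (Iic b) := by
  intro s hs
  have hIcc : uIcc (s - 1) b = Icc (s - 1) b := uIcc_of_le (by linarith [mem_Iic.mp hs])
  have hprim := continuousOn_primitive_interval_left (μ := volume)
    (hIcc ▸ (hf.mono Icc_subset_Iic_self).integrableOn_Icc : IntegrableOn f (uIcc (s - 1) b))
  rw [hIcc] at hprim
  refine (hprim s ⟨by linarith, hs⟩).mono_of_mem_nhdsWithin ?_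
  exact mem_nhdsWithin.mpr
    ⟨Ioi (s - 1), isOpen_Ioi, by simp, fun x hx => ⟨le_of_lt hx.1, hx.2⟩⟩

theorem hasDerivAt_integral_left_of_continuousOn_Iic (hf : ContinuousOn f (Iic b)) {s : ℝ}
    (hs : s < b) : HasDerivAt (fun u => ∫ x in u..b, f x) (-f s) s :=
  integral_hasDerivAt_left
    ((hf.mono (uIcc_of_le hs.le ▸ Icc_subset_Iic_self)).intervalIntegrable)
    ((hf.mono Iio_subset_Iic_self).stronglyMeasurableAtFilter isOpen_Iio s hs)
    (hf.continuousAt (Iic_mem_nhds hs))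

end IntegralLeft

theorem mul_deriv_sub_deriv_eq_one {G F ζ χ : ℝ → ℝ} {g c d t : ℝ}
    (hζ : ∀ s, ζ s = c - Real.log (G s)) (hχ : ∀ s, χ s = (F s + d) / G s)
    (hG : HasDerivAt G (-g) t) (hF : HasDerivAt F (-G t) t) (hGt : G t ≠ 0) :
    χ t * deriv ζ t - deriv χ t = 1 := by
  have hζ' : HasDerivAt ζ (g / G t) t := by
    rw [funext hζ]
    simpa [neg_div] using (hG.log hGt).const_sub c
  have hχ' : HasDerivAt χ ((-G t * G t - (F t + d) * -g) / G t ^ 2) t := by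
    rw [funext hχ]
    exact (hF.add_const d).div hG hGt
  rw [hζ'.deriv, hχ'.deriv, hχ t]
  field_simp
  ring

theorem stmt_4_general (α α₀ : ℝ) (hα : 0 < α) (R : ℝ → ℝ)
    (hRpos : ∀ s ≤ α₀, 0 < R s)
    (hRsmooth : ContDiffOn ℝ (⊤ : ℕ∞) R (Set.Iic α₀))
    (G ζ χ : ℝ → ℝ)
    (hG : ∀ s, G s = 1 / (α * R α₀) + ∫ u in s..α₀, 1 / R u)
    (hζ : ∀ s, ζ s =
      Real.log (1 / (α * R α₀) + ∫ u in Set.Iic α₀, 1 / R u) - Real.log (G s))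
    (hχ : ∀ s, χ s = ((∫ u in s..α₀, G u) + 1 / (α ^ 2 * R α₀)) / G s)
    (t : ℝ) (ht : t < α₀) :
    χ t * deriv ζ t - deriv χ t = 1 := by
  have hRα₀ : 0 < R α₀ := hRpos α₀ le_rfl
  have hinv_cont : ContinuousOn (fun u => 1 / R u) (Iic α₀) :=
    continuousOn_const.div hRsmooth.continuousOn fun s hs => (hRpos s hs).ne'
  have hG_cont : ContinuousOn G (Iic α₀) := by
    rw [funext hG]
    exact continuousOn_const.add (continuousOn_integral_left_Iic hinv_cont)
  have hG_deriv : HasDerivAt G (-(1 / R t)) t := by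
    rw [funext hG]
    exact (hasDerivAt_integral_left_of_continuousOn_Iic hinv_cont ht).const_add _
  have hGt : 0 < G t := by
    rw [hG t]
    have : 0 ≤ ∫ u in t..α₀, 1 / R u :=
      integral_nonneg ht.le fun u hu => (one_div_pos.mpr (hRpos u hu.2)).le
    positivity
  exact mul_deriv_sub_deriv_eq_one hζ hχ hG_deriv
    (hasDerivAt_integral_left_of_continuousOn_Iic hG_cont ht) hGt.ne'

/-- Let `α > 0`, `α₀ ∈ ℝ`, and `R : (−∞, α₀] → (0, ∞)` smooth and positive with
`C_R := ∫_{−∞}^{α₀} dt/R(t) < +∞`. Define `G(t) = 1/(α·R(α₀)) + ∫_t^{α₀} dt₁/R(t₁)`,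
`ζ(t) = log(1/(α·R(α₀)) + C_R) − log G(t)` and
`χ(t) = (∫_t^{α₀} G(t₂) dt₂ + 1/(α²·R(α₀)))/G(t)`.
Then for all `t < α₀`, the first ODE of Section 5.3 holds: `χ(t)·ζ′(t) − χ′(t) = 1`. -/
theorem stmt_4 (α α₀ : ℝ) (hα : 0 < α) (R : ℝ → ℝ)
    (hRpos : ∀ s ≤ α₀, 0 < R s)
    (hRsmooth : ContDiffOn ℝ (⊤ : ℕ∞) R (Set.Iic α₀))
    (hRint : IntegrableOn (fun s => 1 / R s) (Set.Iic α₀))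
    (G ζ χ : ℝ → ℝ)
    (hG : ∀ s, G s = 1 / (α * R α₀) + ∫ u in s..α₀, 1 / R u)
    (hζ : ∀ s, ζ s =
      Real.log (1 / (α * R α₀) + ∫ u in Set.Iic α₀, 1 / R u) - Real.log (G s))
    (hχ : ∀ s, χ s = ((∫ u in s..α₀, G u) + 1 / (α ^ 2 * R α₀)) / G s)
    (t : ℝ) (ht : t < α₀) :
    χ t * deriv ζ t - deriv χ t = 1 :=
  stmt_4_general α α₀ hα R hRpos hRsmooth G ζ χ hG hζ hχ t ht
end

section
/- Let t ∈ (−∞, α₀) be such that ∫_t^{α₀} G(t₂) dt₂ + 1/(α²·R(α₀)) ≠ R(t)·G(t)². Then χ(t)·ζ″(t) − χ″(t) ≠ 0 and the second equation of the ODE system of Section 5.3 holds at t: (χ(t) + χ′(t)²/(χ(t)·ζ″(t) − χ″(t)))·e^{ζ(t)} = (1/(α·R(α₀)) + C_R)·R(t). -/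
/-!
Write `H(s) := ∫_s^{α₀} G + 1/(α²R(α₀))`, so that `G' = -1/R`, `H' = -G` and `χ = H/G`.
Then `ζ' = 1/(RG)` and `χ' = H/(RG²) - 1`, and the `R'` terms cancel in
`χζ'' - χ'' = (RG² - H)/(R²G³)`, which is nonzero exactly when `H ≠ RG²`.
Hence `χ'²/(χζ'' - χ'') = (RG² - H)/G`, so `χ + χ'²/(χζ'' - χ'') = RG`,
and multiplying by `e^ζ = (1/(αR(α₀)) + C_R)/G` gives the equation.
-/

open MeasureTheory Filter Topology Set Real

lemma deriv_deriv_eq_of_eventually_hasDerivAt {f f' : ℝ → ℝ} {x a : ℝ}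
    (hf : ∀ᶠ y in 𝓝 x, HasDerivAt f (f' y) y) (hf' : HasDerivAt f' a x) :
    deriv (deriv f) x = a :=
  (EventuallyEq.deriv_eq (hf.mono fun _ hy => hy.deriv)).trans hf'.deriv

section IntegralLeft

variable {f : ℝ → ℝ} {a : ℝ}

lemma hasDerivAt_intervalIntegral_left_of_continuousOn (hf : ContinuousOn f (Iic a)) {s : ℝ}
    (hs : s < a) : HasDerivAt (fun u => ∫ x in u..a, f x) (-f s) s :=
  intervalIntegral.integral_hasDerivAt_left
    ((hf.mono Icc_subset_Iic_self).intervalIntegrable_of_Icc hs.le)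
    ((hf.mono Iio_subset_Iic_self).stronglyMeasurableAtFilter isOpen_Iio s hs)
    (hf.continuousAt (Iic_mem_nhds hs))

lemma continuousOn_intervalIntegral_left (hf : ContinuousOn f (Iic a)) :
    ContinuousOn (fun u => ∫ x in u..a, f x) (Iic a) := by
  intro x hx
  have hle : x - 1 ≤ a := by linarith [mem_Iic.1 hx]
  have hcont := intervalIntegral.continuousOn_primitive_interval_left (μ := volume)
    ((hf.mono Icc_subset_Iic_self).integrableOn_compact isCompact_Icc |>.mono_set
      (uIcc_of_le hle).subset)
  rw [uIcc_of_le hle] at hcont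
  refine (hcont x ⟨by linarith, hx⟩).mono_of_mem_nhdsWithin ?_
  rw [← Iic_inter_Ici]
  exact inter_mem_nhdsWithin _ (Ici_mem_nhds (by linarith))

end IntegralLeft

section ODE

variable {R G H : ℝ → ℝ} {t : ℝ}

lemma eventually_hasDerivAt_const_sub_log (c : ℝ)
    (hG : ∀ᶠ s in 𝓝 t, HasDerivAt G (-(R s)⁻¹) s) (hGt : G t ≠ 0) :
    ∀ᶠ s in 𝓝 t, HasDerivAt (fun s => c - log (G s)) (R s * G s)⁻¹ s := by
  filter_upwards [hG, hG.self_of_nhds.continuousAt.eventually_ne hGt] with s hGs hs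
  exact ((hGs.log hs).const_sub c).congr_deriv (by ring)

lemma deriv_deriv_const_sub_log (c : ℝ)
    (hG : ∀ᶠ s in 𝓝 t, HasDerivAt G (-(R s)⁻¹) s) (hGt : G t ≠ 0)
    (hR : DifferentiableAt ℝ R t) (hRt : R t ≠ 0) :
    deriv (deriv fun s => c - log (G s)) t = (1 - deriv R t * G t) / (R t * G t) ^ 2 := by
  refine deriv_deriv_eq_of_eventually_hasDerivAt
    (eventually_hasDerivAt_const_sub_log c hG hGt) ?_
  refine ((hR.hasDerivAt.mul hG.self_of_nhds).inv (mul_ne_zero hRt hGt)).congr_deriv ?_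
  simp only [Pi.mul_apply]
  field_simp
  ring

lemma eventually_hasDerivAt_div
    (hG : ∀ᶠ s in 𝓝 t, HasDerivAt G (-(R s)⁻¹) s) (hH : ∀ᶠ s in 𝓝 t, HasDerivAt H (-G s) s)
    (hGt : G t ≠ 0) :
    ∀ᶠ s in 𝓝 t, HasDerivAt (fun s => H s / G s) (H s / (R s * G s ^ 2) - 1) s := by
  filter_upwards [hG, hH, hG.self_of_nhds.continuousAt.eventually_ne hGt] with s hGs hHs hs
  refine (hHs.div hGs hs).congr_deriv ?_
  field_simp
  ring

lemma deriv_deriv_div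
    (hG : ∀ᶠ s in 𝓝 t, HasDerivAt G (-(R s)⁻¹) s) (hH : ∀ᶠ s in 𝓝 t, HasDerivAt H (-G s) s)
    (hGt : G t ≠ 0) (hR : DifferentiableAt ℝ R t) (hRt : R t ≠ 0) :
    deriv (deriv fun s => H s / G s) t =
      (2 * H t - R t * G t ^ 2 - H t * deriv R t * G t) / (R t ^ 2 * G t ^ 3) := by
  refine deriv_deriv_eq_of_eventually_hasDerivAt (eventually_hasDerivAt_div hG hH hGt) ?_
  refine ((hH.self_of_nhds.div (hR.hasDerivAt.mul (hG.self_of_nhds.pow 2))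
    (mul_ne_zero hRt (pow_ne_zero 2 hGt))).sub_const 1).congr_deriv ?_
  simp only [Pi.mul_apply, Pi.pow_apply]
  field_simp
  ring

lemma mul_deriv_deriv_const_sub_log_sub_deriv_deriv_div (c : ℝ)
    (hG : ∀ᶠ s in 𝓝 t, HasDerivAt G (-(R s)⁻¹) s) (hH : ∀ᶠ s in 𝓝 t, HasDerivAt H (-G s) s)
    (hGt : G t ≠ 0) (hR : DifferentiableAt ℝ R t) (hRt : R t ≠ 0) :
    H t / G t * deriv (deriv fun s => c - log (G s)) t - deriv (deriv fun s => H s / G s) t =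
      (R t * G t ^ 2 - H t) / (R t ^ 2 * G t ^ 3) := by
  rw [deriv_deriv_const_sub_log c hG hGt hR hRt, deriv_deriv_div hG hH hGt hR hRt]
  field_simp
  ring

theorem ode_second_equation (c : ℝ)
    (hG : ∀ᶠ s in 𝓝 t, HasDerivAt G (-(R s)⁻¹) s) (hH : ∀ᶠ s in 𝓝 t, HasDerivAt H (-G s) s)
    (hGt : 0 < G t) (hR : DifferentiableAt ℝ R t) (hRt : R t ≠ 0)
    (hne : H t ≠ R t * G t ^ 2) :
    H t / G t * deriv (deriv fun s => c - log (G s)) t - deriv (deriv fun s => H s / G s) t ≠ 0 ∧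
    (H t / G t + deriv (fun s => H s / G s) t ^ 2 /
        (H t / G t * deriv (deriv fun s => c - log (G s)) t -
          deriv (deriv fun s => H s / G s) t)) * exp (c - log (G t)) = exp c * R t := by
  have hsub : R t * G t ^ 2 - H t ≠ 0 := sub_ne_zero.2 hne.symm
  rw [mul_deriv_deriv_const_sub_log_sub_deriv_deriv_div c hG hH hGt.ne' hR hRt,
    (eventually_hasDerivAt_div hG hH hGt.ne').self_of_nhds.deriv, exp_sub, exp_log hGt]
  refine ⟨div_ne_zero hsub (by positivity), ?_⟩
  have hderiv : H t / (R t * G t ^ 2) - 1 = -(R t * G t ^ 2 - H t) / (R t * G t ^ 2) := by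
    field_simp
    ring
  rw [hderiv]
  field_simp
  ring

end ODE

theorem stmt_5_general (α α₀ : ℝ) (hα : 0 < α) (R : ℝ → ℝ)
    (hRpos : ∀ s ≤ α₀, 0 < R s)
    (hRsmooth : ContDiffOn ℝ (⊤ : ℕ∞) R (Set.Iic α₀))
    (G ζ χ : ℝ → ℝ)
    (hG : ∀ s, G s = 1 / (α * R α₀) + ∫ u in s..α₀, 1 / R u)
    (hζ : ∀ s, ζ s =
      Real.log (1 / (α * R α₀) + ∫ u in Set.Iic α₀, 1 / R u) - Real.log (G s))
    (hχ : ∀ s, χ s = ((∫ u in s..α₀, G u) + 1 / (α ^ 2 * R α₀)) / G s)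
    (t : ℝ) (ht : t < α₀)
    (hne : (∫ u in t..α₀, G u) + 1 / (α ^ 2 * R α₀) ≠ R t * (G t) ^ 2) :
    χ t * deriv (deriv ζ) t - deriv (deriv χ) t ≠ 0 ∧
    (χ t + (deriv χ t) ^ 2 / (χ t * deriv (deriv ζ) t - deriv (deriv χ) t)) *
        Real.exp (ζ t) =
      (1 / (α * R α₀) + ∫ u in Set.Iic α₀, 1 / R u) * R t := by
  have hc : 0 < 1 / (α * R α₀) := by have := hRpos α₀ le_rfl; positivity
  have hinv_nonneg : ∀ u ≤ α₀, 0 ≤ 1 / R u := fun u hu => (one_div_pos.2 (hRpos u hu)).le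
  have hinv_cont : ContinuousOn (fun u => 1 / R u) (Iic α₀) :=
    continuousOn_const.div hRsmooth.continuousOn fun s hs => (hRpos s hs).ne'
  have hG_eq : G = fun s => 1 / (α * R α₀) + ∫ u in s..α₀, 1 / R u := funext hG
  have hG_cont : ContinuousOn G (Iic α₀) :=
    hG_eq ▸ continuousOn_const.add (continuousOn_intervalIntegral_left hinv_cont)
  have hG_deriv : ∀ᶠ s in 𝓝 t, HasDerivAt G (-(R s)⁻¹) s := by
    filter_upwards [Iio_mem_nhds ht] with s hs
    rw [hG_eq, ← one_div]
    exact (hasDerivAt_intervalIntegral_left_of_continuousOn hinv_cont hs).const_add _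
  have hH_deriv : ∀ᶠ s in 𝓝 t, HasDerivAt (fun s => (∫ u in s..α₀, G u) + 1 / (α ^ 2 * R α₀))
      (-G s) s := by
    filter_upwards [Iio_mem_nhds ht] with s hs
    exact (hasDerivAt_intervalIntegral_left_of_continuousOn hG_cont hs).add_const _
  have hGt : 0 < G t := by
    rw [hG t]
    linarith [intervalIntegral.integral_nonneg (μ := volume) ht.le fun u hu => hinv_nonneg u hu.2]
  set K := 1 / (α * R α₀) + ∫ u in Set.Iic α₀, 1 / R u
  have hK : 0 < K := by
    linarith [setIntegral_nonneg (μ := volume) measurableSet_Iic hinv_nonneg]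
  have hR : DifferentiableAt ℝ R t :=
    (hRsmooth.contDiffAt (Iic_mem_nhds ht)).differentiableAt (by simp)
  obtain rfl : ζ = _ := funext hζ
  obtain rfl : χ = _ := funext hχ
  simpa only [exp_log hK] using
    ode_second_equation (log K) hG_deriv hH_deriv hGt hR (hRpos t ht.le).ne' hne

/-- In the setting of Section 5.3 (with `G`, `ζ`, `χ` as defined there), let
`t < α₀` be such that `∫_t^{α₀} G(t₂) dt₂ + 1/(α²·R(α₀)) ≠ R(t)·G(t)²`.
Then `χ(t)·ζ″(t) − χ″(t) ≠ 0` and the second ODE of Section 5.3 holds at `t`: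
`(χ(t) + χ′(t)²/(χ(t)·ζ″(t) − χ″(t)))·e^{ζ(t)} = (1/(α·R(α₀)) + C_R)·R(t)`. -/
theorem stmt_5 (α α₀ : ℝ) (hα : 0 < α) (R : ℝ → ℝ)
    (hRpos : ∀ s ≤ α₀, 0 < R s)
    (hRsmooth : ContDiffOn ℝ (⊤ : ℕ∞) R (Set.Iic α₀))
    (hRint : IntegrableOn (fun s => 1 / R s) (Set.Iic α₀))
    (G ζ χ : ℝ → ℝ)
    (hG : ∀ s, G s = 1 / (α * R α₀) + ∫ u in s..α₀, 1 / R u)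
    (hζ : ∀ s, ζ s =
      Real.log (1 / (α * R α₀) + ∫ u in Set.Iic α₀, 1 / R u) - Real.log (G s))
    (hχ : ∀ s, χ s = ((∫ u in s..α₀, G u) + 1 / (α ^ 2 * R α₀)) / G s)
    (t : ℝ) (ht : t < α₀)
    (hne : (∫ u in t..α₀, G u) + 1 / (α ^ 2 * R α₀) ≠ R t * (G t) ^ 2) :
    χ t * deriv (deriv ζ) t - deriv (deriv χ) t ≠ 0 ∧
    (χ t + (deriv χ t) ^ 2 / (χ t * deriv (deriv ζ) t - deriv (deriv χ) t)) *
        Real.exp (ζ t) =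
      (1 / (α * R α₀) + ∫ u in Set.Iic α₀, 1 / R u) * R t :=
  stmt_5_general α α₀ hα R hRpos hRsmooth G ζ χ hG hζ hχ t ht hne
end

section
/- (Remark 1.5 of the paper.) Suppose in addition that R is decreasing (antitone) on (−∞, α₀]. Then the defining inequality of the class 𝔑_{α₀,α} holds for ALL t ∈ (−∞, α₀): ∫_t^{α₀} (1/(α·R(α₀)) + ∫_{t₂}^{α₀} dt₁/R(t₁)) dt₂ + 1/(α²·R(α₀)) < R(t)·(1/(α·R(α₀)) + ∫_t^{α₀} dt₁/R(t₁))². -/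
/-! Write `c = 1/(α R(α₀))`, `J(u) = ∫_u^{α₀} 1/R` and `I = J(t)`, so that `1/(α² R(α₀)) = R(α₀) c²`
and the right-hand side expands to `R(t) (c² + 2cI + I²)`. Since `R` decreases, `1/R ≥ 1/R(t)` on
`[t, α₀]`, whence `α₀ - t ≤ R(t) I`. Comparing term by term: `R(α₀) c² ≤ R(t) c²`,
`∫_t^{α₀} c = c (α₀ - t) < 2c (α₀ - t) ≤ 2 R(t) c I`, and `∫_t^{α₀} J ≤ (α₀ - t) I ≤ R(t) I²`. -/

open MeasureTheory Set

lemma sub_le_mul_integral_one_div_of_le {R : ℝ → ℝ} {t b : ℝ} (htb : t ≤ b)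
    (hpos : ∀ u ∈ Icc t b, 0 < R u) (hle : ∀ u ∈ Icc t b, R u ≤ R t)
    (hint : IntervalIntegrable (fun u => 1 / R u) volume t b) :
    b - t ≤ R t * ∫ u in t..b, 1 / R u := by
  have hRt : 0 < R t := hpos t ⟨le_rfl, htb⟩
  have hmono : ∫ _ in t..b, 1 / R t ≤ ∫ u in t..b, 1 / R u :=
    intervalIntegral.integral_mono_on htb intervalIntegrable_const hint fun u hu =>
      one_div_le_one_div_of_le (hpos u hu) (hle u hu)
  rw [intervalIntegral.integral_const, smul_eq_mul] at hmono
  calc b - t = R t * ((b - t) * (1 / R t)) := by field_simp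
    _ ≤ R t * ∫ u in t..b, 1 / R u := by gcongr

lemma intervalIntegrable_integral_left {f : ℝ → ℝ} {t b : ℝ}
    (hf : IntervalIntegrable f volume t b) :
    IntervalIntegrable (fun u => ∫ v in u..b, f v) volume t b :=
  (intervalIntegral.continuousOn_primitive_interval_left
    ((intervalIntegrable_iff' (μ := volume)).1 hf)).intervalIntegrable

lemma integral_integral_le_mul_integral {f : ℝ → ℝ} {t b : ℝ} (htb : t ≤ b)
    (hf : IntervalIntegrable f volume t b) (hf0 : ∀ u ∈ Icc t b, 0 ≤ f u) :
    ∫ u in t..b, ∫ v in u..b, f v ≤ (b - t) * ∫ v in t..b, f v := by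
  have hmono := intervalIntegral.integral_mono_on htb (intervalIntegrable_integral_left hf)
    (intervalIntegrable_const (c := ∫ v in t..b, f v)) fun u hu =>
      intervalIntegral.integral_mono_interval hu.1 hu.2 le_rfl
        (ae_restrict_of_forall_mem measurableSet_Ioc fun v hv => hf0 v (Ioc_subset_Icc_self hv)) hf
  rwa [intervalIntegral.integral_const, smul_eq_mul] at hmono

theorem integral_const_add_tail_add_lt_mul_sq {f : ℝ → ℝ} {t b c r r₀ : ℝ} (htb : t < b)
    (hc : 0 < c) (hf : IntervalIntegrable f volume t b) (hf0 : ∀ u ∈ Icc t b, 0 ≤ f u)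
    (hr : b - t ≤ r * ∫ u in t..b, f u) (hr₀ : r₀ ≤ r) :
    (∫ u in t..b, (c + ∫ v in u..b, f v)) + r₀ * c ^ 2 < r * (c + ∫ u in t..b, f u) ^ 2 := by
  have hsplit : ∫ u in t..b, (c + ∫ v in u..b, f v) =
      (b - t) * c + ∫ u in t..b, ∫ v in u..b, f v := by
    rw [intervalIntegral.integral_add intervalIntegrable_const (intervalIntegrable_integral_left hf),
      intervalIntegral.integral_const, smul_eq_mul]
  set I := ∫ u in t..b, f u
  have hI : 0 ≤ I := intervalIntegral.integral_nonneg htb.le hf0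
  have hconst : (b - t) * c < 2 * c * (r * I) := by nlinarith
  have htail : ∫ u in t..b, ∫ v in u..b, f v ≤ r * I ^ 2 :=
    (integral_integral_le_mul_integral htb.le hf hf0).trans
      (by nlinarith [mul_le_mul_of_nonneg_right hr hI])
  have hsq : r₀ * c ^ 2 ≤ r * c ^ 2 := by gcongr
  rw [hsplit]
  linarith

theorem stmt_7_general (α α₀ : ℝ) (hα : 0 < α) (R : ℝ → ℝ)
    (hRpos : ∀ s ≤ α₀, 0 < R s)
    (hRanti : AntitoneOn R (Set.Iic α₀)) :
    ∀ t < α₀,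
      (∫ u in t..α₀, (1 / (α * R α₀) + ∫ v in u..α₀, 1 / R v)) +
          1 / (α ^ 2 * R α₀) <
        R t * (1 / (α * R α₀) + ∫ u in t..α₀, 1 / R u) ^ 2 := by
  intro t ht
  have hRα₀ : 0 < R α₀ := hRpos α₀ le_rfl
  have hpos : ∀ u ∈ Icc t α₀, 0 < R u := fun u hu => hRpos u hu.2
  have hle : ∀ u ∈ Icc t α₀, R u ≤ R t := fun u hu =>
    hRanti (hu.1.trans hu.2) hu.2 hu.1
  have hint : IntervalIntegrable (fun u => 1 / R u) volume t α₀ := by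
    refine MonotoneOn.intervalIntegrable fun x hx y hy hxy => ?_
    rw [uIcc_of_le ht.le] at hx hy
    exact one_div_le_one_div_of_le (hpos y hy) (hRanti hx.2 hy.2 hxy)
  have hconst : 1 / (α ^ 2 * R α₀) = R α₀ * (1 / (α * R α₀)) ^ 2 := by field_simp
  rw [hconst]
  exact integral_const_add_tail_add_lt_mul_sq ht (by positivity) hint
    (fun u hu => (one_div_pos.mpr (hpos u hu)).le)
    (sub_le_mul_integral_one_div_of_le ht.le hpos hle hint) (hle α₀ ⟨ht.le, le_rfl⟩)

/-- (Remark 1.5.) Let `α > 0`, `α₀ ∈ ℝ`, and `R : (−∞, α₀] → (0, ∞)` smooth and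
positive with `∫_{−∞}^{α₀} dt/R(t) < +∞`. If moreover `R` is decreasing (antitone)
on `(−∞, α₀]`, then the defining inequality of the class `𝔑_{α₀,α}` holds for all
`t < α₀`:
`∫_t^{α₀} (1/(α·R(α₀)) + ∫_{t₂}^{α₀} dt₁/R(t₁)) dt₂ + 1/(α²·R(α₀))
  < R(t)·(1/(α·R(α₀)) + ∫_t^{α₀} dt₁/R(t₁))²`. -/
theorem stmt_7 (α α₀ : ℝ) (hα : 0 < α) (R : ℝ → ℝ)
    (hRpos : ∀ s ≤ α₀, 0 < R s)
    (hRsmooth : ContDiffOn ℝ (⊤ : ℕ∞) R (Set.Iic α₀))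
    (hRint : IntegrableOn (fun s => 1 / R s) (Set.Iic α₀))
    (hRanti : AntitoneOn R (Set.Iic α₀)) :
    ∀ t < α₀,
      (∫ u in t..α₀, (1 / (α * R α₀) + ∫ v in u..α₀, 1 / R v)) +
          1 / (α ^ 2 * R α₀) <
        R t * (1 / (α * R α₀) + ∫ u in t..α₀, 1 / R u) ^ 2 :=
  stmt_7_general α α₀ hα R hRpos hRanti
end

section
/- For every ε ∈ (0, 1/4) and every t ≤ −1, one has σ_{ε,t}(s) = s for all s ≥ t + 1. -/
/-!
The kernel `k` has mass `1`: the indicator has mass `1 - 2ε` and `ρ_ε` has mass `1`. Since `ρ_ε`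
vanishes outside `[-ε/4, ε/4]`, `k` vanishes outside `[t + 3ε/4, t + 1 - 3ε/4]`. Hence the
primitive `F τ = ∫_{-∞}^τ k` is `0` far to the left and `1` from `t + 1` on, so it is integrable on
every half-line `(-∞, r]`, and `σ(s) = ∫_0^s F = s` because `[0, s]` lies to the right of `t + 1`.
-/

open MeasureTheory Set ContinuousLinearMap
open scoped Convolution

noncomputable def expBump (u : ℝ) : ℝ :=
  if |u| < 1 then Real.exp (1 / (u ^ 2 - 1)) else 0

theorem expBump_eq_indicator :
    expBump = (Ioo (-1) 1).indicator fun u => Real.exp (1 / (u ^ 2 - 1)) := by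
  ext u
  simp only [expBump, indicator, mem_Ioo, abs_lt]

theorem expBump_eq_zero {u : ℝ} (hu : 1 ≤ |u|) : expBump u = 0 :=
  if_neg hu.not_gt

theorem integrable_expBump : Integrable expBump := by
  rw [expBump_eq_indicator, integrable_indicator_iff measurableSet_Ioo]
  refine Measure.integrableOn_of_bounded (M := 1) measure_Ioo_lt_top.ne
    (Measurable.aestronglyMeasurable (by measurability)) ?_
  filter_upwards [ae_restrict_mem measurableSet_Ioo] with u ⟨hu₁, hu₂⟩
  have hneg : 1 / (u ^ 2 - 1) ≤ 0 := div_nonpos_of_nonneg_of_nonpos zero_le_one (by nlinarith)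
  simpa [abs_of_pos (Real.exp_pos _)] using hneg

theorem integral_expBump_pos : 0 < ∫ u, expBump u := by
  have hnonneg : 0 ≤ expBump := by
    rw [expBump_eq_indicator]; exact indicator_nonneg fun u _ => (Real.exp_pos _).le
  rw [integral_pos_iff_support_of_nonneg hnonneg integrable_expBump, expBump_eq_indicator,
    support_indicator, Function.support_eq_univ fun u => (Real.exp_pos _).ne', inter_univ,
    Real.volume_Ioo]
  norm_num

theorem integral_mul_comp_mul_left {c : ℝ} (hc : 0 < c) (ρ : ℝ → ℝ) :
    ∫ u, c * ρ (c * u) = ∫ u, ρ u := by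
  rw [integral_const_mul, Measure.integral_comp_mul_left, smul_eq_mul, abs_of_pos (inv_pos.2 hc),
    mul_inv_cancel_left₀ hc.ne']

noncomputable def mollifier (δ u : ℝ) : ℝ :=
  δ⁻¹ * (expBump (δ⁻¹ * u) / ∫ x, expBump x)

section Mollifier

variable {δ : ℝ}

theorem integrable_mollifier (hδ : δ ≠ 0) : Integrable (mollifier δ) :=
  ((integrable_expBump.div_const _).comp_mul_left' (inv_ne_zero hδ)).const_mul _

theorem integral_mollifier (hδ : 0 < δ) : ∫ u, mollifier δ u = 1 := by
  unfold mollifier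
  rw [integral_mul_comp_mul_left (inv_pos.2 hδ) fun v => expBump v / ∫ x, expBump x,
    integral_div, div_self integral_expBump_pos.ne']

theorem mollifier_eq_zero (hδ : 0 < δ) {u : ℝ} (hu : δ ≤ |u|) : mollifier δ u = 0 := by
  rw [mollifier, expBump_eq_zero, zero_div, mul_zero]
  rwa [abs_mul, abs_inv, abs_of_pos hδ, inv_mul_eq_div, one_le_div hδ]

end Mollifier

section IndicatorConvolution

variable {α β : ℝ} {g : ℝ → ℝ}

theorem integrable_indicator_Ioo_one : Integrable ((Ioo α β).indicator fun _ => (1 : ℝ)) :=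
  (integrable_indicator_iff measurableSet_Ioo).2 (integrableOn_const measure_Ioo_lt_top.ne)

theorem integral_indicator_Ioo_convolution (hg : Integrable g) (hαβ : α ≤ β) :
    ∫ x, ((Ioo α β).indicator (fun _ => (1 : ℝ)) ⋆[mul ℝ ℝ] g) x = (β - α) * ∫ u, g u := by
  rw [integral_convolution (L := mul ℝ ℝ) integrable_indicator_Ioo_one hg,
    integral_indicator measurableSet_Ioo, setIntegral_const, Real.volume_real_Ioo_of_le hαβ,
    smul_eq_mul, mul_one, mul_apply']

theorem indicator_Ioo_convolution_eq_zero {δ x : ℝ} (hg : ∀ u, δ ≤ |u| → g u = 0)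
    (hx : ∀ y ∈ Ioo α β, δ ≤ |x - y|) :
    ((Ioo α β).indicator (fun _ => (1 : ℝ)) ⋆[mul ℝ ℝ] g) x = 0 := by
  rw [convolution_mul]
  refine integral_eq_zero_of_ae (ae_of_all _ fun y => ?_)
  by_cases hy : y ∈ Ioo α β
  · simp [hg _ (hx y hy)]
  · simp [indicator_of_notMem hy]

theorem indicator_Ioo_convolution_eq_zero_of_le {δ x : ℝ} (hg : ∀ u, δ ≤ |u| → g u = 0)
    (hx : x ≤ α - δ) : ((Ioo α β).indicator (fun _ => (1 : ℝ)) ⋆[mul ℝ ℝ] g) x = 0 :=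
  indicator_Ioo_convolution_eq_zero hg fun y hy => by
    rw [abs_sub_comm]; exact le_abs.2 (Or.inl (by linarith [hy.1]))

theorem indicator_Ioo_convolution_eq_zero_of_ge {δ x : ℝ} (hg : ∀ u, δ ≤ |u| → g u = 0)
    (hx : β + δ ≤ x) : ((Ioo α β).indicator (fun _ => (1 : ℝ)) ⋆[mul ℝ ℝ] g) x = 0 :=
  indicator_Ioo_convolution_eq_zero hg fun y hy => le_abs.2 (Or.inl (by linarith [hy.2]))

end IndicatorConvolution

section Primitive

variable {k : ℝ → ℝ}

theorem setIntegral_Iic_eq_zero_of_le {a τ : ℝ} (hk : ∀ x ≤ a, k x = 0) (hτ : τ ≤ a) :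
    ∫ x in Iic τ, k x = 0 :=
  setIntegral_eq_zero_of_forall_eq_zero fun x hx => hk x (le_trans hx hτ)

theorem setIntegral_Iic_eq_integral_of_le {b τ : ℝ} (hk : ∀ x, b ≤ x → k x = 0) (hτ : b ≤ τ) :
    ∫ x in Iic τ, k x = ∫ x, k x :=
  setIntegral_eq_integral_of_forall_compl_eq_zero fun x hx =>
    hk x (hτ.trans (not_le.1 hx).le)

theorem integrableOn_Iic_primitive (hk : Integrable k) {a : ℝ} (hka : ∀ x ≤ a, k x = 0)
    (r : ℝ) : IntegrableOn (fun τ => ∫ x in Iic τ, k x) (Iic r) := by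
  have hleft : IntegrableOn (fun τ => ∫ x in Iic τ, k x) (Iic a) :=
    integrableOn_zero.congr_fun (fun τ hτ => (setIntegral_Iic_eq_zero_of_le hka hτ).symm)
      measurableSet_Iic
  have hright : IntegrableOn (fun τ => ∫ x in Iic τ, k x) (Icc a r) :=
    (hk.integrableOn.continuousOn_Iic_primitive_Iic.mono Icc_subset_Iic_self).integrableOn_Icc
  exact (hleft.union hright).mono_set Iic_subset_Iic_union_Icc

theorem integral_Iic_primitive_sub (hk : Integrable k) {a b : ℝ} (hka : ∀ x ≤ a, k x = 0)
    (hkb : ∀ x, b ≤ x → k x = 0) {c s : ℝ} (hc : b ≤ c) (hs : b ≤ s) :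
    (∫ τ in Iic s, ∫ x in Iic τ, k x) - ∫ τ in Iic c, ∫ x in Iic τ, k x =
      (s - c) * ∫ x, k x := by
  rw [intervalIntegral.integral_Iic_sub_Iic (integrableOn_Iic_primitive hk hka c)
    (integrableOn_Iic_primitive hk hka s)]
  have hconst : EqOn (fun τ => ∫ x in Iic τ, k x) (fun _ => ∫ x, k x) (uIcc c s) :=
    fun τ hτ => setIntegral_Iic_eq_integral_of_le hkb ((le_min hc hs).trans hτ.1)
  rw [intervalIntegral.integral_congr hconst, intervalIntegral.integral_const, smul_eq_mul]

end Primitive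

/-- For every `ε ∈ (0, 1/4)` and every `t ≤ −1`, one has `σ_{ε,t}(s) = s` for all
`s ≥ t + 1`. -/
theorem stmt_13 (ε t : ℝ) (hε : ε ∈ Set.Ioo (0 : ℝ) (1 / 4)) (ht : t ≤ -1)
    (θ ρ ρε k σ : ℝ → ℝ)
    (hθ : ∀ u, θ u = if |u| < 1 then Real.exp (1 / (u ^ 2 - 1)) else 0)
    (hρ : ∀ u, ρ u = θ u / ∫ x, θ x)
    (hρε : ∀ u, ρε u = (4 / ε) * ρ (4 * u / ε))
    (hk : ∀ x, k x = (1 / (1 - 2 * ε)) *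
      ∫ y, Set.indicator (Set.Ioo (t + ε) (t + 1 - ε)) (fun _ => (1 : ℝ)) y *
        ρε (x - y))
    (hσ : ∀ s, σ s =
      (∫ t₂ in Set.Iic s, ∫ t₁ in Set.Iic t₂, k t₁) -
        ∫ t₂ in Set.Iic (0 : ℝ), ∫ t₁ in Set.Iic t₂, k t₁) :
    ∀ s ≥ t + 1, σ s = s := by
  intro s hs
  obtain ⟨hε0, hε4⟩ := hε
  obtain rfl : θ = expBump := funext hθ
  obtain rfl : ρε = mollifier (ε / 4) :=
    funext fun u => by rw [hρε, hρ, mollifier, inv_div, mul_div_right_comm]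
  have hδ : 0 < ε / 4 := by positivity
  have hk_conv : ∀ x, k x = 1 / (1 - 2 * ε) *
      ((Ioo (t + ε) (t + 1 - ε)).indicator (fun _ => (1 : ℝ)) ⋆[mul ℝ ℝ] mollifier (ε / 4)) x :=
    hk
  have hk_int : Integrable k := funext hk_conv ▸ (integrable_indicator_Ioo_one.integrable_convolution
    _ (integrable_mollifier hδ.ne')).const_mul _
  have hk_one : ∫ x, k x = 1 := by
    rw [integral_congr_ae (ae_of_all _ hk_conv), integral_const_mul,
      integral_indicator_Ioo_convolution (integrable_mollifier hδ.ne') (by linarith),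
      integral_mollifier hδ, mul_one, show t + 1 - ε - (t + ε) = 1 - 2 * ε by ring]
    exact one_div_mul_cancel (by linarith)
  have hk_lo : ∀ x ≤ t + ε - ε / 4, k x = 0 := fun x hx => by
    rw [hk_conv, indicator_Ioo_convolution_eq_zero_of_le (fun _ => mollifier_eq_zero hδ) hx,
      mul_zero]
  have hk_hi : ∀ x, t + 1 - ε + ε / 4 ≤ x → k x = 0 := fun x hx => by
    rw [hk_conv, indicator_Ioo_convolution_eq_zero_of_ge (fun _ => mollifier_eq_zero hδ) hx,
      mul_zero]
  rw [hσ, integral_Iic_primitive_sub hk_int hk_lo hk_hi (by linarith) (by linarith), hk_one]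
  ring
end
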